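/- arXiv:1811.05764 — 5 statements merged into one kernel-verified Lean document; each statement's English description precedes it below -/
import Mathlib

section
/- Let η : (0,∞) × (-1,1)³ → ℝ be defined by η(t,x) = λ / (λ G + 1/√t + Σ_{i=1}^{3} (1/(1+xᵢ) + 1/(1-xᵢ))) with λ ∈ (0, 1/5] and G ≥ 0. Then pointwise on (0,∞) × (-1,1)³ one has 2η(∂ₜη - Δη) + 4|∇η|² ≤ 25λ² ≤ 1, i.e. (∂ₜ - Δ)η/η + 2|∇η|²/η² ≤ 1/(2η²). -/
open MeasureTheory Finset Set

noncomputable section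

/-- Space-time `ℝ × ℝ³`. -/
abbrev SpTime := ℝ × (Fin 3 → ℝ)

/-- The parabolic metric `d((t,x),(s,y)) = max(√|t-s|, |x-y|_∞)`. -/
def pd (z w : SpTime) : ℝ := max (Real.sqrt |z.1 - w.1|) ‖z.2 - w.2‖

/-- Parabolic ball of radius `R` centred at `z`. -/
def pball (z : SpTime) (R : ℝ) : Set SpTime := {w | pd z w < R}

/-- Partial derivative in time. -/
def pderivT (f : SpTime → ℝ) (z : SpTime) : ℝ := deriv (fun s => f (s, z.2)) z.1

/-- Partial derivative in the `i`-th spatial direction. -/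
def pderivX (f : SpTime → ℝ) (i : Fin 3) (z : SpTime) : ℝ :=
  deriv (fun s => f (z.1, Function.update z.2 i s)) (z.2 i)

/-- Second partial derivative in the `i`-th spatial direction. -/
def pderivXX (f : SpTime → ℝ) (i : Fin 3) (z : SpTime) : ℝ :=
  deriv (fun s => pderivX f i (z.1, Function.update z.2 i s)) (z.2 i)

/-- Spatial Laplacian. -/
def plap (f : SpTime → ℝ) (z : SpTime) : ℝ := ∑ i, pderivXX f i z

/-- The heat operator `∂ₜ - Δ`. -/
def heatOp (f : SpTime → ℝ) (z : SpTime) : ℝ := pderivT f z - plap f z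

/-- Parabolic rescaling of a kernel: `Φ_T(t,x) = T⁻⁵ Φ(t/T², x/T)`. -/
def scaleK (Φ : SpTime → ℝ) (T : ℝ) (z : SpTime) : ℝ :=
  (T ^ 5)⁻¹ * Φ (z.1 / T ^ 2, fun i => z.2 i / T)

/-- Space-time convolution. -/
def convK (f g : SpTime → ℝ) (z : SpTime) : ℝ := ∫ w, f (z - w) * g w

/-- `PsiAux Φ T n = Ψ_{T,n+1} = Φ_{T/2} * ⋯ * Φ_{T 2^{-(n+1)}}`. -/
def PsiAux (Φ : SpTime → ℝ) (T : ℝ) : ℕ → SpTime → ℝ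
  | 0 => scaleK Φ (T / 2)
  | n + 1 => convK (PsiAux Φ T n) (scaleK Φ (T / 2 ^ (n + 2)))

/-- `Ψ_{T,n} = Φ_{T 2^{-1}} * ⋯ * Φ_{T 2^{-n}}` (for `n ≥ 1`). -/
def PsiN (Φ : SpTime → ℝ) (T : ℝ) (n : ℕ) : SpTime → ℝ := PsiAux Φ T (n - 1)

/-- Backward parabolic ball. -/
def pballB (z : SpTime) (R : ℝ) : Set SpTime := {w | pd z w < R ∧ w.1 < z.1}

/-- Parabolic boundary of a domain. -/
def pBoundary (D : Set SpTime) : Set SpTime :=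
  {z | z ∈ closure D ∧ ∀ r, 0 < r → ¬ pballB z r ⊆ closure D}

/-- `D_d`: the points of `D` at parabolic distance at least `d` from the parabolic boundary. -/
def shrink (D : Set SpTime) (d : ℝ) : Set SpTime := {z ∈ D | ∀ w ∈ pBoundary D, d ≤ pd z w}

/-- The parabolic box `P_R = (R²,1) × {|x|_∞ < 1-R}`. -/
def PRset (R : ℝ) : Set SpTime := Set.Ioo (R ^ 2) 1 ×ˢ {x : Fin 3 → ℝ | ‖x‖ < 1 - R}

/-! Write `η = λ / D`. For any `D` that is `C²` along the coordinate lines, the gradient terms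
cancel: `2 (λ/D) (∂ₜ - Δ)(λ/D) + 4 |∇(λ/D)|² = 2 λ² (ΔD - ∂ₜD) / D³`. Here `∂ₜD = -(t^{-1/2})³/2`
and `∂ᵢ²D = 2 (1+xᵢ)⁻³ + 2 (1-xᵢ)⁻³`, so `ΔD - ∂ₜD` is at most twice the sum of the cubes of the
nonnegative summands of `D`, hence at most `2 D³`. This gives the bound `4 λ² ≤ 25 λ²`. -/

open Filter Topology Function

section OrderedSemiring

variable {ι R : Type*} [CommSemiring R] [PartialOrder R] [IsOrderedRing R]

theorem Finset.sum_pow_le_pow_sum_of_nonneg {s : Finset ι} {f : ι → R}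
    (hf : ∀ i ∈ s, 0 ≤ f i) {n : ℕ} (hn : n ≠ 0) :
    ∑ i ∈ s, f i ^ n ≤ (∑ i ∈ s, f i) ^ n := by
  obtain ⟨m, rfl⟩ := Nat.exists_eq_succ_of_ne_zero hn
  calc ∑ i ∈ s, f i ^ (m + 1) ≤ ∑ i ∈ s, f i * (∑ j ∈ s, f j) ^ m :=
        Finset.sum_le_sum fun i hi => (pow_succ' (f i) m).trans_le <|
          mul_le_mul_of_nonneg_left (pow_le_pow_left₀ (hf i hi) (single_le_sum hf hi) m) (hf i hi)
    _ = (∑ i ∈ s, f i) ^ (m + 1) := by rw [← Finset.sum_mul, pow_succ']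

theorem pow_three_add_sum_le (s : Finset ι) {a : R} {b c : ι → R} (ha : 0 ≤ a)
    (hb : ∀ i ∈ s, 0 ≤ b i) (hc : ∀ i ∈ s, 0 ≤ c i) :
    a ^ 3 + ∑ i ∈ s, (b i ^ 3 + c i ^ 3) ≤ (a + ∑ i ∈ s, (b i + c i)) ^ 3 := by
  have hbc : ∀ i ∈ s, 0 ≤ b i + c i := fun i hi => add_nonneg (hb i hi) (hc i hi)
  calc a ^ 3 + ∑ i ∈ s, (b i ^ 3 + c i ^ 3) ≤ a ^ 3 + ∑ i ∈ s, (b i + c i) ^ 3 := by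
        gcongr with i hi
        exact pow_add_pow_le (hb i hi) (hc i hi) three_ne_zero
    _ ≤ a ^ 3 + (∑ i ∈ s, (b i + c i)) ^ 3 := by
        gcongr
        exact Finset.sum_pow_le_pow_sum_of_nonneg hbc three_ne_zero
    _ ≤ (a + ∑ i ∈ s, (b i + c i)) ^ 3 :=
        pow_add_pow_le ha (Finset.sum_nonneg hbc) three_ne_zero

end OrderedSemiring

theorem hasDerivAt_deriv_const_div {𝕜 : Type*} [NontriviallyNormedField 𝕜] (c : 𝕜)
    {f f' : 𝕜 → 𝕜} {f'' x : 𝕜}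
    (hf : ∀ᶠ y in 𝓝 x, HasDerivAt f (f' y) y) (hf' : HasDerivAt f' f'' x) (hx : f x ≠ 0) :
    HasDerivAt (deriv fun y => c / f y) (-c * f'' / f x ^ 2 + 2 * c * f' x ^ 2 / f x ^ 3) x := by
  have hne : ∀ᶠ y in 𝓝 x, f y ≠ 0 := hf.self_of_nhds.continuousAt.eventually_ne hx
  have hderiv : (deriv fun y => c / f y) =ᶠ[𝓝 x] fun y => -c * f' y / f y ^ 2 := by
    filter_upwards [hf, hne] with y hy hy0
    rw [deriv_const_div c hy.differentiableAt hy0, hy.deriv]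
  refine HasDerivAt.congr_of_eventuallyEq ?_ hderiv
  refine ((hf'.const_mul (-c)).fun_div (hf.self_of_nhds.fun_pow 2) (pow_ne_zero 2 hx)).congr_deriv ?_
  field_simp
  ring

theorem pderivX_update (f : SpTime → ℝ) (i : Fin 3) (t : ℝ) (x : Fin 3 → ℝ) (s : ℝ) :
    pderivX f i (t, update x i s) = deriv (fun u => f (t, update x i u)) s := by
  simp only [pderivX, update_idem, update_self]

theorem pderivXX_eq_deriv_deriv (f : SpTime → ℝ) (i : Fin 3) (z : SpTime) :
    pderivXX f i z = deriv (deriv fun u => f (z.1, update z.2 i u)) (z.2 i) := by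
  simp only [pderivXX, pderivX_update]

theorem apply_update_self_eq (D : SpTime → ℝ) (z : SpTime) (i : Fin 3) :
    D (z.1, update z.2 i (z.2 i)) = D z := by
  rw [update_eq_self]

section ConstDiv

variable (c : ℝ) {D : SpTime → ℝ} {z : SpTime}

theorem pderivT_const_div {Dt : ℝ} (hT : HasDerivAt (fun s => D (s, z.2)) Dt z.1)
    (hz : D z ≠ 0) : pderivT (fun w => c / D w) z = -c * Dt / D z ^ 2 := by
  rw [pderivT, deriv_const_div c hT.differentiableAt hz, hT.deriv]

theorem pderivX_const_div {i : Fin 3} {Dx : ℝ}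
    (hX : HasDerivAt (fun u => D (z.1, update z.2 i u)) Dx (z.2 i)) (hz : D z ≠ 0) :
    pderivX (fun w => c / D w) i z = -c * Dx / D z ^ 2 := by
  rw [← apply_update_self_eq D z i] at hz ⊢
  rw [pderivX, deriv_const_div c hX.differentiableAt hz, hX.deriv]

theorem pderivXX_const_div {i : Fin 3} {Dx : ℝ → ℝ} {Dxx : ℝ}
    (hX : ∀ᶠ u in 𝓝 (z.2 i), HasDerivAt (fun u => D (z.1, update z.2 i u)) (Dx u) u)
    (hXX : HasDerivAt Dx Dxx (z.2 i)) (hz : D z ≠ 0) :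
    pderivXX (fun w => c / D w) i z = -c * Dxx / D z ^ 2 + 2 * c * Dx (z.2 i) ^ 2 / D z ^ 3 := by
  rw [← apply_update_self_eq D z i] at hz ⊢
  rw [pderivXX_eq_deriv_deriv]
  exact (hasDerivAt_deriv_const_div c hX hXX hz).deriv

theorem heat_identity_const_div {Dt : ℝ} {Dx : Fin 3 → ℝ → ℝ} {Dxx : Fin 3 → ℝ}
    (hT : HasDerivAt (fun s => D (s, z.2)) Dt z.1)
    (hX : ∀ i, ∀ᶠ u in 𝓝 (z.2 i), HasDerivAt (fun u => D (z.1, update z.2 i u)) (Dx i u) u)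
    (hXX : ∀ i, HasDerivAt (Dx i) (Dxx i) (z.2 i)) (hz : D z ≠ 0) :
    2 * (c / D z) * heatOp (fun w => c / D w) z + 4 * ∑ i, pderivX (fun w => c / D w) i z ^ 2
      = 2 * c ^ 2 * (∑ i, Dxx i - Dt) / D z ^ 3 := by
  simp only [heatOp, plap, pderivT_const_div c hT hz, pderivX_const_div c (hX _).self_of_nhds hz,
    pderivXX_const_div c (hX _) (hXX _) hz]
  simp only [div_pow, mul_pow, ← Finset.sum_div, ← Finset.mul_sum, Finset.sum_add_distrib]
  field_simp
  ring

end ConstDiv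

def barrier (u : ℝ) : ℝ := 1 / (1 + u) + 1 / (1 - u)

theorem hasDerivAt_one_div_one_add {u : ℝ} (hu : 1 + u ≠ 0) :
    HasDerivAt (fun v => 1 / (1 + v)) (-(1 / (1 + u)) ^ 2) u := by
  refine ((hasDerivAt_const u 1).div ((hasDerivAt_id' u).const_add 1) hu).congr_deriv ?_
  rw [div_pow, one_pow]
  ring

theorem hasDerivAt_one_div_one_sub {u : ℝ} (hu : 1 - u ≠ 0) :
    HasDerivAt (fun v => 1 / (1 - v)) ((1 / (1 - u)) ^ 2) u := by
  refine ((hasDerivAt_const u 1).div ((hasDerivAt_id' u).const_sub 1) hu).congr_deriv ?_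
  rw [div_pow, one_pow]
  ring

theorem hasDerivAt_barrier {u : ℝ} (hu : u ∈ Ioo (-1 : ℝ) 1) :
    HasDerivAt barrier ((1 / (1 - u)) ^ 2 - (1 / (1 + u)) ^ 2) u := by
  have h₁ : 1 + u ≠ 0 := by linarith [hu.1]
  have h₂ : 1 - u ≠ 0 := by linarith [hu.2]
  refine ((hasDerivAt_one_div_one_add h₁).add (hasDerivAt_one_div_one_sub h₂)).congr_deriv ?_
  ring

theorem hasDerivAt_barrier_deriv {u : ℝ} (hu : u ∈ Ioo (-1 : ℝ) 1) :
    HasDerivAt (fun v => (1 / (1 - v)) ^ 2 - (1 / (1 + v)) ^ 2)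
      (2 * (1 / (1 + u)) ^ 3 + 2 * (1 / (1 - u)) ^ 3) u := by
  have h₁ : 1 + u ≠ 0 := by linarith [hu.1]
  have h₂ : 1 - u ≠ 0 := by linarith [hu.2]
  refine (((hasDerivAt_one_div_one_sub h₂).fun_pow 2).sub
    ((hasDerivAt_one_div_one_add h₁).fun_pow 2)).congr_deriv ?_
  push_cast
  ring

def etaDenom (lam G : ℝ) (z : SpTime) : ℝ := lam * G + 1 / Real.sqrt z.1 + ∑ i, barrier (z.2 i)

theorem etaDenom_pos {lam G : ℝ} (hlamG : 0 ≤ lam * G) {z : SpTime} (ht : 0 < z.1)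
    (hx : ∀ i, z.2 i ∈ Ioo (-1 : ℝ) 1) : 0 < etaDenom lam G z := by
  have hbarrier : ∀ i, 0 ≤ barrier (z.2 i) := fun i => by
    have : 0 < 1 + z.2 i := by linarith [(hx i).1]
    have : 0 < 1 - z.2 i := by linarith [(hx i).2]
    unfold barrier
    positivity
  have : 0 < 1 / Real.sqrt z.1 := by positivity
  have := Finset.sum_nonneg fun i (_ : i ∈ Finset.univ) => hbarrier i
  unfold etaDenom
  linarith

theorem hasDerivAt_etaDenom_time (lam G : ℝ) {t : ℝ} (ht : 0 < t) (x : Fin 3 → ℝ) :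
    HasDerivAt (fun s => etaDenom lam G (s, x)) (-(1 / Real.sqrt t) ^ 3 / 2) t := by
  have hsqrt : Real.sqrt t ≠ 0 := (Real.sqrt_pos.mpr ht).ne'
  have h := (hasDerivAt_const t (1 : ℝ)).fun_div (Real.hasDerivAt_sqrt ht.ne') hsqrt
  simp only [etaDenom]
  refine ((h.const_add (lam * G)).add_const _).congr_deriv ?_
  field_simp
  ring

theorem etaDenom_update (lam G t : ℝ) (x : Fin 3 → ℝ) (i : Fin 3) (u : ℝ) :
    etaDenom lam G (t, update x i u)
      = barrier u + (lam * G + 1 / Real.sqrt t + ∑ j ∈ Finset.univ \ {i}, barrier (x j)) := by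
  simp only [etaDenom, apply_update (fun _ => barrier), Finset.sum_update_of_mem (Finset.mem_univ i)]
  ring

theorem hasDerivAt_etaDenom_update (lam G t : ℝ) (x : Fin 3 → ℝ) (i : Fin 3) {u : ℝ}
    (hu : u ∈ Ioo (-1 : ℝ) 1) :
    HasDerivAt (fun v => etaDenom lam G (t, update x i v))
      ((1 / (1 - u)) ^ 2 - (1 / (1 + u)) ^ 2) u := by
  simp only [etaDenom_update]
  exact (hasDerivAt_barrier hu).add_const _

theorem etaDenom_heat_source_le {lam G : ℝ} (hlamG : 0 ≤ lam * G) {z : SpTime} (ht : 0 < z.1)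
    (hx : ∀ i, z.2 i ∈ Ioo (-1 : ℝ) 1) :
    ∑ i, (2 * (1 / (1 + z.2 i)) ^ 3 + 2 * (1 / (1 - z.2 i)) ^ 3) - -(1 / Real.sqrt z.1) ^ 3 / 2
      ≤ 2 * etaDenom lam G z ^ 3 := by
  set a := 1 / Real.sqrt z.1
  set b := fun i => 1 / (1 + z.2 i)
  set c := fun i => 1 / (1 - z.2 i)
  have ha : 0 ≤ a := by positivity
  have hb : ∀ i ∈ Finset.univ, 0 ≤ b i := fun i _ => by
    have : 0 < 1 + z.2 i := by linarith [(hx i).1]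
    positivity
  have hc : ∀ i ∈ Finset.univ, 0 ≤ c i := fun i _ => by
    have : 0 < 1 - z.2 i := by linarith [(hx i).2]
    positivity
  have hsum : 0 ≤ a + ∑ i, (b i + c i) :=
    add_nonneg ha (Finset.sum_nonneg fun i hi => add_nonneg (hb i hi) (hc i hi))
  calc ∑ i, (2 * b i ^ 3 + 2 * c i ^ 3) - -a ^ 3 / 2 ≤ 2 * (a ^ 3 + ∑ i, (b i ^ 3 + c i ^ 3)) := by
        simp only [mul_add, Finset.mul_sum]
        linarith [pow_nonneg ha 3]
    _ ≤ 2 * (a + ∑ i, (b i + c i)) ^ 3 := by gcongr; exact pow_three_add_sum_le _ ha hb hc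
    _ ≤ 2 * etaDenom lam G z ^ 3 := by
        gcongr
        simp only [etaDenom, barrier, b, c, a]
        linarith

theorem etaDenom_heat_quantity_le {lam G : ℝ} (hlamG : 0 ≤ lam * G) {z : SpTime} (ht : 0 < z.1)
    (hx : ∀ i, z.2 i ∈ Ioo (-1 : ℝ) 1) :
    2 * (lam / etaDenom lam G z) * heatOp (fun w => lam / etaDenom lam G w) z
      + 4 * ∑ i, pderivX (fun w => lam / etaDenom lam G w) i z ^ 2 ≤ 4 * lam ^ 2 := by
  have hD := etaDenom_pos hlamG ht hx
  have hX : ∀ i, ∀ᶠ u in 𝓝 (z.2 i), HasDerivAt (fun v => etaDenom lam G (z.1, update z.2 i v))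
      ((1 / (1 - u)) ^ 2 - (1 / (1 + u)) ^ 2) u := fun i => by
    filter_upwards [Ioo_mem_nhds (hx i).1 (hx i).2] with u hu
    exact hasDerivAt_etaDenom_update lam G z.1 z.2 i hu
  rw [heat_identity_const_div lam (hasDerivAt_etaDenom_time lam G ht z.2) hX
    (fun i => hasDerivAt_barrier_deriv (hx i)) hD.ne', div_le_iff₀ (by positivity)]
  calc 2 * lam ^ 2 * (∑ i, (2 * (1 / (1 + z.2 i)) ^ 3 + 2 * (1 / (1 - z.2 i)) ^ 3)
        - -(1 / Real.sqrt z.1) ^ 3 / 2) ≤ 2 * lam ^ 2 * (2 * etaDenom lam G z ^ 3) := by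
        gcongr
        exact etaDenom_heat_source_le hlamG ht hx
    _ = 4 * lam ^ 2 * etaDenom lam G z ^ 3 := by ring

/-- the weight `η` satisfies the differential inequality
`2η(∂ₜη - Δη) + 4|∇η|² ≤ 25λ² ≤ 1` for `0 < λ ≤ 1/5`. -/
theorem stmt_1 (lam G : ℝ) (hlam : 0 < lam) (hlam' : lam ≤ 1/5) (hG : 0 ≤ G)
    (η : SpTime → ℝ)
    (hη : ∀ z : SpTime, η z = lam / (lam * G + 1 / Real.sqrt z.1 +
      ∑ i : Fin 3, (1 / (1 + z.2 i) + 1 / (1 - z.2 i))))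
    (z : SpTime) (ht : 0 < z.1) (hx : ∀ i, |z.2 i| < 1) :
    (2 * η z * (pderivT η z - plap η z) + 4 * ∑ i, (pderivX η i z) ^ 2 ≤ 25 * lam ^ 2) ∧
    (25 * lam ^ 2 ≤ 1) ∧
    ((pderivT η z - plap η z) / η z + 2 * (∑ i, (pderivX η i z) ^ 2) / (η z) ^ 2
      ≤ 1 / (2 * (η z) ^ 2)) := by
  have hlamG : 0 ≤ lam * G := mul_nonneg hlam.le hG
  have hx' : ∀ i, z.2 i ∈ Ioo (-1 : ℝ) 1 := fun i => abs_lt.mp (hx i)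
  have hquad : 2 * η z * heatOp η z + 4 * ∑ i, pderivX η i z ^ 2 ≤ 4 * lam ^ 2 := by
    obtain rfl : η = fun w => lam / etaDenom lam G w := funext hη
    exact etaDenom_heat_quantity_le hlamG ht hx'
  have hη_pos : 0 < η z := by
    rw [hη]
    exact div_pos hlam (etaDenom_pos hlamG ht hx')
  have h25 : 25 * lam ^ 2 ≤ 1 := by nlinarith
  refine ⟨hquad.trans (by nlinarith), h25, ?_⟩
  calc heatOp η z / η z + 2 * (∑ i, pderivX η i z ^ 2) / η z ^ 2
      = (2 * η z * heatOp η z + 4 * ∑ i, pderivX η i z ^ 2) / (2 * η z ^ 2) := by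
        field_simp
        ring
    _ ≤ 1 / (2 * η z ^ 2) := by gcongr; linarith
end
end

section
/- Let u, η be functions with u continuous on [0,1]×[-1,1]³ and η continuous, C² and strictly positive on the interior, vanishing on the boundary, and satisfying (∂ₜ-Δ)η/η + 2|∇η|²/η² ≤ 1/(2η²) pointwise on the interior. Suppose (∂ₜ-Δ)u = -u³ + g pointwise on (0,1]×(-1,1)³ with |g| ≤ G. If uη attains a positive maximum at an interior point z₀ (or at a point with t=1), then at z₀ one has u² ≤ η⁻²/2 + G/u, and consequently u(z₀)η(z₀) ≤ max{1, 2η(z₀)³ G}. -/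
/-! At a maximum of `uη` the gradient condition gives `η ∇u = -u ∇η`, so the product rule turns
`(∂ₜ - Δ)(uη) ≥ 0` into `η (∂ₜ - Δ)u + uη ((∂ₜ - Δ)η/η + 2|∇η|²/η²) ≥ 0`. Inserting the equation
for `u` and the bound on `η` and dividing by `uη` gives `u² ≤ η⁻²/2 + G/u`; multiplying by `2η³u`
gives `2(uη)³ ≤ uη + 2η³G`, which is impossible when `uη > max{1, 2η³G}`. -/

open MeasureTheory Finset Set

noncomputable section

section ProductRule

variable {f u η : SpTime → ℝ} {w z : SpTime} {i : Fin 3}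

open Topology Filter

lemma hasDerivAt_update_line (w : SpTime) (i : Fin 3) (s : ℝ) :
    HasDerivAt (fun s => ((w.1, Function.update w.2 i s) : SpTime))
      ((0, Pi.single i 1) : SpTime) s := by
  refine (hasDerivAt_const s w.1).prodMk (hasDerivAt_pi.2 fun j => ?_)
  rcases eq_or_ne j i with rfl | hj
  · simpa using hasDerivAt_id' s
  · simpa [Function.update_of_ne hj, Pi.single_eq_of_ne hj] using hasDerivAt_const s (w.2 j)

lemma update_line_self (w : SpTime) (i : Fin 3) :
    ((w.1, Function.update w.2 i (w.2 i)) : SpTime) = w := by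
  simp

lemma tendsto_update_line (z : SpTime) (i : Fin 3) :
    Tendsto (fun s => ((z.1, Function.update z.2 i s) : SpTime)) (𝓝 (z.2 i)) (𝓝 z) := by
  simpa only [update_line_self] using
    (hasDerivAt_update_line z i (z.2 i)).continuousAt.tendsto

lemma hasDerivAt_fderiv_update_line (hf : DifferentiableAt ℝ f w) :
    HasDerivAt (fun s => f (w.1, Function.update w.2 i s))
      (fderiv ℝ f w ((0, Pi.single i 1) : SpTime)) (w.2 i) :=
  hf.hasFDerivAt.comp_hasDerivAt_of_eq (w.2 i) (hasDerivAt_update_line w i (w.2 i))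
    (update_line_self w i).symm

lemma pderivX_eq_fderiv (hf : DifferentiableAt ℝ f w) :
    pderivX f i w = fderiv ℝ f w ((0, Pi.single i 1) : SpTime) :=
  hasDerivAt_fderiv_update_line hf |>.deriv

lemma hasDerivAt_pderivX (hf : DifferentiableAt ℝ f w) :
    HasDerivAt (fun s => f (w.1, Function.update w.2 i s)) (pderivX f i w) (w.2 i) :=
  (hasDerivAt_fderiv_update_line hf).differentiableAt.hasDerivAt

lemma hasDerivAt_pderivT (hf : DifferentiableAt ℝ f w) :
    HasDerivAt (fun s => f (s, w.2)) (pderivT f w) w.1 :=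
  (hf.hasFDerivAt.comp_hasDerivAt_of_eq w.1
    ((hasDerivAt_id w.1).prodMk (hasDerivAt_const w.1 w.2)) rfl).differentiableAt.hasDerivAt

lemma hasDerivAt_pderivXX (hf : ContDiffAt ℝ 2 f z) :
    HasDerivAt (fun s => pderivX f i (z.1, Function.update z.2 i s)) (pderivXX f i z) (z.2 i) := by
  set v : SpTime := (0, Pi.single i 1)
  have hdf : DifferentiableAt ℝ (fun w => fderiv ℝ f w v) z :=
    ((hf.fderiv_right (m := 1) (by norm_num)).differentiableAt (by norm_num)).clm_apply
      (differentiableAt_const v)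
  have hline : HasDerivAt (fun s => fderiv ℝ f (z.1, Function.update z.2 i s) v)
      (fderiv ℝ (fun w => fderiv ℝ f w v) z v) (z.2 i) :=
    hdf.hasFDerivAt.comp_hasDerivAt_of_eq (z.2 i) (hasDerivAt_update_line z i (z.2 i))
      (update_line_self z i).symm
  have hf_near : ∀ᶠ w in 𝓝 z, DifferentiableAt ℝ f w :=
    (hf.eventually (by norm_num)).mono fun w hw => hw.differentiableAt (by norm_num)
  have heq : (fun s => pderivX f i (z.1, Function.update z.2 i s))
      =ᶠ[𝓝 (z.2 i)] fun s => fderiv ℝ f (z.1, Function.update z.2 i s) v :=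
    ((tendsto_update_line z i).eventually hf_near).mono fun s hs => pderivX_eq_fderiv hs
  exact (hline.congr_of_eventuallyEq heq).differentiableAt.hasDerivAt

lemma pderivT_mul (hu : DifferentiableAt ℝ u w) (hη : DifferentiableAt ℝ η w) :
    pderivT (fun z => u z * η z) w = pderivT u w * η w + u w * pderivT η w :=
  ((hasDerivAt_pderivT hu).mul (hasDerivAt_pderivT hη)).deriv

lemma pderivX_mul (hu : DifferentiableAt ℝ u w) (hη : DifferentiableAt ℝ η w) :
    pderivX (fun z => u z * η z) i w = pderivX u i w * η w + u w * pderivX η i w := by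
  have h := ((hasDerivAt_pderivX (i := i) hu).mul (hasDerivAt_pderivX hη)).deriv
  rwa [update_line_self] at h

lemma pderivXX_mul (hu : ContDiffAt ℝ 2 u z) (hη : ContDiffAt ℝ 2 η z) :
    pderivXX (fun w => u w * η w) i z =
      pderivXX u i z * η z + 2 * (pderivX u i z * pderivX η i z) + u z * pderivXX η i z := by
  have hu_near := (hu.eventually (by norm_num)).mono fun w hw => hw.differentiableAt two_ne_zero
  have hη_near := (hη.eventually (by norm_num)).mono fun w hw => hw.differentiableAt two_ne_zero
  have heq : (fun s => pderivX (fun w => u w * η w) i (z.1, Function.update z.2 i s))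
      =ᶠ[𝓝 (z.2 i)] fun s =>
        pderivX u i (z.1, Function.update z.2 i s) * η (z.1, Function.update z.2 i s)
          + u (z.1, Function.update z.2 i s) * pderivX η i (z.1, Function.update z.2 i s) :=
    ((tendsto_update_line z i).eventually (hu_near.and hη_near)).mono fun s hs =>
      pderivX_mul hs.1 hs.2
  have hud := hasDerivAt_pderivX (i := i) (hu.differentiableAt two_ne_zero)
  have hηd := hasDerivAt_pderivX (i := i) (hη.differentiableAt two_ne_zero)
  have h := ((((hasDerivAt_pderivXX hu).mul hηd).add
    (hud.mul (hasDerivAt_pderivXX hη))).congr_of_eventuallyEq heq).deriv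
  rw [update_line_self] at h
  exact h.trans (by ring)

lemma heatOp_mul (hu : ContDiffAt ℝ 2 u z) (hη : ContDiffAt ℝ 2 η z) :
    heatOp (fun w => u w * η w) z =
      heatOp u z * η z + u z * heatOp η z - 2 * ∑ i, pderivX u i z * pderivX η i z := by
  simp only [heatOp, plap, pderivT_mul (hu.differentiableAt two_ne_zero)
    (hη.differentiableAt two_ne_zero), pderivXX_mul hu hη, Finset.sum_add_distrib,
    ← Finset.sum_mul, ← Finset.mul_sum]
  ring

lemma heatOp_mul_of_pderivX_mul_eq_zero (hu : ContDiffAt ℝ 2 u z) (hη : ContDiffAt ℝ 2 η z)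
    (hη0 : η z ≠ 0)
    (hgrad : ∀ i, pderivX (fun w => u w * η w) i z = 0) :
    heatOp (fun w => u w * η w) z = η z * heatOp u z +
      u z * η z * (heatOp η z / η z + 2 * (∑ i, pderivX η i z ^ 2) / η z ^ 2) := by
  have hcancel (i : Fin 3) : pderivX u i z * η z = -(u z * pderivX η i z) := by
    have h := hgrad i
    rw [pderivX_mul (hu.differentiableAt two_ne_zero) (hη.differentiableAt two_ne_zero)] at h
    linarith
  have hcross :
      (∑ i, pderivX u i z * pderivX η i z) * η z = -(u z * ∑ i, pderivX η i z ^ 2) := by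
    simp only [Finset.sum_mul, Finset.mul_sum, ← Finset.sum_neg_distrib]
    exact Finset.sum_congr rfl fun i _ => by linear_combination pderivX η i z * hcancel i
  rw [heatOp_mul hu hη]
  field_simp
  linear_combination (-2 : ℝ) * hcross

end ProductRule

lemma le_max_one_of_two_mul_pow_three_le {m K : ℝ} (h : 2 * m ^ 3 ≤ m + K) : m ≤ max 1 K := by
  by_contra! hlt
  obtain ⟨hm, hK⟩ := max_lt_iff.mp hlt
  nlinarith [mul_pos (zero_lt_one.trans hm) (by nlinarith : (0 : ℝ) < m ^ 2 - 1)]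

theorem stmt_3_general (u η g : SpTime → ℝ) (G : ℝ) (z₀ : SpTime)
    (hu2 : ContDiffAt ℝ 2 u z₀) (hη2 : ContDiffAt ℝ 2 η z₀)
    (hη_pos : 0 < η z₀)
    (hηineq : heatOp η z₀ / η z₀ + 2 * (∑ i, (pderivX η i z₀) ^ 2) / (η z₀) ^ 2
        ≤ 1 / (2 * (η z₀) ^ 2))
    (hpde : heatOp u z₀ = -(u z₀) ^ 3 + g z₀)
    (hg : |g z₀| ≤ G)
    (hgrad : ∀ i, pderivX (fun z => u z * η z) i z₀ = 0)
    (hlap : plap (fun z => u z * η z) z₀ ≤ 0)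
    (htime : 0 ≤ pderivT (fun z => u z * η z) z₀)
    (hpos : 0 < u z₀ * η z₀) :
    (u z₀) ^ 2 ≤ 1 / (2 * (η z₀) ^ 2) + G / u z₀ ∧
      u z₀ * η z₀ ≤ max 1 (2 * (η z₀) ^ 3 * G) := by
  have hu : 0 < u z₀ := pos_of_mul_pos_left hpos hη_pos.le
  set Q := heatOp η z₀ / η z₀ + 2 * (∑ i, (pderivX η i z₀) ^ 2) / (η z₀) ^ 2
  have hheat : 0 ≤ heatOp (fun z => u z * η z) z₀ := by
    unfold heatOp
    linarith
  rw [heatOp_mul_of_pderivX_mul_eq_zero hu2 hη2 hη_pos.ne' hgrad, hpde] at hheat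
  have hgu : g z₀ / u z₀ ≤ G / u z₀ := div_le_div_of_nonneg_right (le_of_abs_le hg) hu.le
  have hsq : u z₀ ^ 2 ≤ g z₀ / u z₀ + Q := by
    have h := div_nonneg hheat hpos.le
    have hexp : (η z₀ * (-u z₀ ^ 3 + g z₀) + u z₀ * η z₀ * Q) / (u z₀ * η z₀)
        = -u z₀ ^ 2 + g z₀ / u z₀ + Q := by
      field_simp
    linarith
  have hmain : u z₀ ^ 2 ≤ 1 / (2 * η z₀ ^ 2) + G / u z₀ := by linarith
  refine ⟨hmain, le_max_one_of_two_mul_pow_three_le ?_⟩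
  calc 2 * (u z₀ * η z₀) ^ 3 = 2 * η z₀ ^ 3 * u z₀ * u z₀ ^ 2 := by ring
    _ ≤ 2 * η z₀ ^ 3 * u z₀ * (1 / (2 * η z₀ ^ 2) + G / u z₀) := by gcongr
    _ = u z₀ * η z₀ + 2 * η z₀ ^ 3 * G := by
      field_simp

/-- at a positive maximum of `uη` one has `u² ≤ η⁻²/2 + G/u`, hence
`uη ≤ max{1, 2η³G}`. -/
theorem stmt_3 (u η g : SpTime → ℝ) (G : ℝ) (z₀ : SpTime)
    (hG : 0 ≤ G)
    (hu2 : ContDiffAt ℝ 2 u z₀) (hη2 : ContDiffAt ℝ 2 η z₀)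
    (hη_pos : 0 < η z₀)
    (hηineq : heatOp η z₀ / η z₀ + 2 * (∑ i, (pderivX η i z₀) ^ 2) / (η z₀) ^ 2
        ≤ 1 / (2 * (η z₀) ^ 2))
    (hpde : heatOp u z₀ = -(u z₀) ^ 3 + g z₀)
    (hg : |g z₀| ≤ G)
    (hgrad : ∀ i, pderivX (fun z => u z * η z) i z₀ = 0)
    (hlap : plap (fun z => u z * η z) z₀ ≤ 0)
    (htime : 0 ≤ pderivT (fun z => u z * η z) z₀)
    (hpos : 0 < u z₀ * η z₀) :
    (u z₀) ^ 2 ≤ 1 / (2 * (η z₀) ^ 2) + G / u z₀ ∧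
      u z₀ * η z₀ ≤ max 1 (2 * (η z₀) ^ 3 * G) :=
  stmt_3_general u η g G z₀ hu2 hη2 hη_pos hηineq hpde hg hgrad hlap htime hpos
end
end

section
/- Cubic commutator estimate: let v be a continuous function with local parabolic Hölder seminorm [v]_{α,B(z,T)} < ∞ for some α ∈ (0,1), and let (·)_T denote convolution with the kernel Ψ_T supported in B(0,T) with ∫Ψ_T = 1 satisfying the scaling bound. Then for every point z, |(v_T(z))³ - (v³)_T(z)| ≤ 6 ‖v‖²_{B(z,T)} T^α [v]_{α,B(z,T)}. -/
open MeasureTheory Finset Set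

noncomputable section

/-!
Compare both `v_T(z)³` and `(v³)_T(z)` with `v(z)³`. Since `|a³ - b³| ≤ 3M²|a - b|` when
`|a|, |b| ≤ M`, and `Ψ_T(z - ·)` is a probability density supported in `B(z,T)`, each of them is
within `3M² ∫ Ψ_T(z - w) |v(w) - v(z)| dw ≤ 3M² K ∫ Ψ_T(z - w) d(z,w)^α dw ≤ 3M² K T^α`
of `v(z)³`.
-/

lemma abs_cube_sub_cube_le {a b M : ℝ} (ha : |a| ≤ M) (hb : |b| ≤ M) :
    |a ^ 3 - b ^ 3| ≤ 3 * M ^ 2 * |a - b| := by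
  have hM : 0 ≤ M := (abs_nonneg a).trans ha
  have hsq {x : ℝ} (hx : |x| ≤ M) : x ^ 2 ≤ M ^ 2 := sq_le_sq' (abs_le.1 hx).1 (abs_le.1 hx).2
  have hab : a * b ≤ M ^ 2 := by
    rw [sq]
    exact (le_abs_self _).trans (abs_mul a b ▸ mul_le_mul ha hb (abs_nonneg b) hM)
  have hsum : |a ^ 2 + a * b + b ^ 2| ≤ 3 * M ^ 2 := by
    rw [abs_of_nonneg (by nlinarith [sq_nonneg (a + b)])]
    linarith [hsq ha, hsq hb]
  calc |a ^ 3 - b ^ 3| = |a - b| * |a ^ 2 + a * b + b ^ 2| := by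
        rw [← abs_mul]; congr 1; ring
    _ ≤ 3 * M ^ 2 * |a - b| := by
        rw [mul_comm]; exact mul_le_mul_of_nonneg_right hsum (abs_nonneg _)

section WeightedAverage

variable {X : Type*} [MeasurableSpace X] {μ : Measure X} {ρ f g : X → ℝ} {a M : ℝ}

lemma integral_mul_sub_const (hρ1 : ∫ x, ρ x ∂μ = 1)
    (hf : Integrable (fun x => ρ x * f x) μ) (a : ℝ) :
    ∫ x, ρ x * (f x - a) ∂μ = ∫ x, ρ x * f x ∂μ - a := by
  have hρ : Integrable ρ μ := integrable_of_integral_eq_one hρ1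
  simp_rw [mul_sub]
  rw [integral_sub hf (hρ.mul_const a), integral_mul_const, hρ1, one_mul]

lemma abs_integral_mul_le (hρ0 : ∀ x, 0 ≤ ρ x) (hρ1 : ∫ x, ρ x ∂μ = 1)
    (hfM : ∀ x, ρ x ≠ 0 → |f x| ≤ M) : |∫ x, ρ x * f x ∂μ| ≤ M := by
  have hρ : Integrable ρ μ := integrable_of_integral_eq_one hρ1
  calc |∫ x, ρ x * f x ∂μ| ≤ ∫ x, ρ x * M ∂μ := by
        rw [← Real.norm_eq_abs]
        refine norm_integral_le_of_norm_le (hρ.mul_const M) (ae_of_all _ fun x => ?_)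
        rcases eq_or_ne (ρ x) 0 with h0 | h0
        · simp [h0]
        · rw [Real.norm_eq_abs, abs_mul, abs_of_nonneg (hρ0 x)]
          exact mul_le_mul_of_nonneg_left (hfM x h0) (hρ0 x)
    _ = M := by rw [integral_mul_const, hρ1, one_mul]

lemma abs_integral_mul_sub_le (hρ0 : ∀ x, 0 ≤ ρ x) (hρ1 : ∫ x, ρ x ∂μ = 1)
    (hf : Integrable (fun x => ρ x * f x) μ) (hg : Integrable (fun x => ρ x * g x) μ)
    (hfg : ∀ x, ρ x ≠ 0 → |f x - a| ≤ g x) :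
    |∫ x, ρ x * f x ∂μ - a| ≤ ∫ x, ρ x * g x ∂μ := by
  rw [← integral_mul_sub_const hρ1 hf, ← Real.norm_eq_abs]
  refine norm_integral_le_of_norm_le hg (ae_of_all _ fun x => ?_)
  rcases eq_or_ne (ρ x) 0 with h0 | h0
  · simp [h0]
  · rw [Real.norm_eq_abs, abs_mul, abs_of_nonneg (hρ0 x)]
    exact mul_le_mul_of_nonneg_left (hfg x h0) (hρ0 x)

theorem abs_cube_integral_mul_sub_integral_mul_cube_le (hρ0 : ∀ x, 0 ≤ ρ x)
    (hρ1 : ∫ x, ρ x ∂μ = 1)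
    (hf : Integrable (fun x => ρ x * f x) μ) (hf3 : Integrable (fun x => ρ x * f x ^ 3) μ)
    (hg : Integrable (fun x => ρ x * g x) μ) (hfM : ∀ x, ρ x ≠ 0 → |f x| ≤ M)
    (haM : |a| ≤ M) (hfg : ∀ x, ρ x ≠ 0 → |f x - a| ≤ g x) :
    |(∫ x, ρ x * f x ∂μ) ^ 3 - ∫ x, ρ x * f x ^ 3 ∂μ|
      ≤ 6 * M ^ 2 * ∫ x, ρ x * g x ∂μ := by
  set c := ∫ x, ρ x * f x ∂μ
  have hcube : |a ^ 3 - ∫ x, ρ x * f x ^ 3 ∂μ| ≤ ∫ x, ρ x * (3 * M ^ 2 * g x) ∂μ := by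
    rw [abs_sub_comm]
    refine abs_integral_mul_sub_le hρ0 hρ1 hf3 ?_ fun x hx => ?_
    · simpa only [mul_left_comm] using hg.const_mul (3 * M ^ 2)
    · exact (abs_cube_sub_cube_le (hfM x hx) haM).trans
        (mul_le_mul_of_nonneg_left (hfg x hx) (by positivity))
  simp_rw [mul_left_comm _ (3 * M ^ 2), integral_const_mul] at hcube
  calc |c ^ 3 - ∫ x, ρ x * f x ^ 3 ∂μ|
      ≤ |c ^ 3 - a ^ 3| + |a ^ 3 - ∫ x, ρ x * f x ^ 3 ∂μ| := abs_sub_le _ _ _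
    _ ≤ 3 * M ^ 2 * |c - a| + 3 * M ^ 2 * ∫ x, ρ x * g x ∂μ :=
        add_le_add (abs_cube_sub_cube_le (abs_integral_mul_le hρ0 hρ1 hfM) haM) hcube
    _ ≤ 3 * M ^ 2 * ∫ x, ρ x * g x ∂μ + 3 * M ^ 2 * ∫ x, ρ x * g x ∂μ := by
        gcongr; exact abs_integral_mul_sub_le hρ0 hρ1 hf hg hfg
    _ = 6 * M ^ 2 * ∫ x, ρ x * g x ∂μ := by ring

end WeightedAverage

instance : (volume : Measure SpTime).IsAddHaarMeasure :=
  inferInstanceAs (((volume : Measure ℝ).prod volume).IsAddHaarMeasure)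

lemma pd_nonneg (z w : SpTime) : 0 ≤ pd z w :=
  (Real.sqrt_nonneg _).trans (le_max_left _ _)

lemma pd_self (z : SpTime) : pd z z = 0 := by simp [pd]

lemma pd_zero_sub (z w : SpTime) : pd 0 (z - w) = pd z w := by
  simp [pd, abs_sub_comm, norm_sub_rev]

lemma continuous_pd (z : SpTime) : Continuous (pd z) := by
  unfold pd; fun_prop

lemma mem_pball_of_kernel_ne_zero {Ψ : SpTime → ℝ} {T : ℝ}
    (hsupp : ∀ z, Ψ z ≠ 0 → pd 0 z < T) {z w : SpTime} (hw : Ψ (z - w) ≠ 0) : w ∈ pball z T := by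
  simpa only [pball, mem_ofPred_eq, pd_zero_sub] using hsupp _ hw

lemma integrable_kernel_mul_pd_rpow {Ψ : SpTime → ℝ} {T α : ℝ} (hΨ : Integrable Ψ)
    (hsupp : ∀ z, Ψ z ≠ 0 → pd 0 z < T) (hα : 0 ≤ α) (z : SpTime) :
    Integrable (fun w => Ψ (z - w) * pd z w ^ α) := by
  refine ((hΨ.comp_sub_left z).norm.mul_const (T ^ α)).mono'
    ((hΨ.comp_sub_left z).aestronglyMeasurable.mul
      ((continuous_pd z).measurable.pow_const α).aestronglyMeasurable) (ae_of_all _ fun w => ?_)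
  rcases eq_or_ne (Ψ (z - w)) 0 with h0 | h0
  · simp [h0]
  · have hw : pd z w < T := mem_pball_of_kernel_ne_zero hsupp h0
    rw [norm_mul, Real.norm_of_nonneg (Real.rpow_nonneg (pd_nonneg z w) α)]
    exact mul_le_mul_of_nonneg_left (Real.rpow_le_rpow (pd_nonneg z w) hw.le hα) (norm_nonneg _)

theorem stmt_9_general (Ψ v : SpTime → ℝ) (T α K M : ℝ)
    (hT : 0 < T) (hα : α ∈ Set.Ioo (0:ℝ) 1) (hK : 0 ≤ K)
    (hΨ0 : ∀ z, 0 ≤ Ψ z)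
    (hsupp : ∀ z, Ψ z ≠ 0 → pd 0 z < T)
    (hint : ∫ z, Ψ z = 1)
    (hscale : ∀ x : SpTime, ∫ y, Ψ (x - y) * pd x y ^ α ≤ T ^ α)
    (z : SpTime)
    (hHol : ∀ w ∈ pball z T, ∀ w' ∈ pball z T, |v w - v w'| ≤ K * pd w w' ^ α)
    (hbd : ∀ w ∈ pball z T, |v w| ≤ M)
    (hI1 : Integrable (fun w => Ψ (z - w) * v w))
    (hI3 : Integrable (fun w => Ψ (z - w) * (v w) ^ 3)) :
    |(∫ w, Ψ (z - w) * v w) ^ 3 - ∫ w, Ψ (z - w) * (v w) ^ 3|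
      ≤ 6 * M ^ 2 * T ^ α * K := by
  have hΨ : Integrable Ψ := integrable_of_integral_eq_one hint
  have hρ1 : ∫ w, Ψ (z - w) = 1 := (integral_sub_left_eq_self Ψ volume z).trans hint
  have hz : z ∈ pball z T := by simp [pball, pd_self, hT]
  have hρg := (integrable_kernel_mul_pd_rpow hΨ hsupp hα.1.le z).const_mul K
  simp_rw [mul_left_comm K] at hρg
  calc _ ≤ 6 * M ^ 2 * ∫ w, Ψ (z - w) * (K * pd z w ^ α) :=
        abs_cube_integral_mul_sub_integral_mul_cube_le (fun _ => hΨ0 _) hρ1 hI1 hI3 hρg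
          (fun w hw => hbd w (mem_pball_of_kernel_ne_zero hsupp hw)) (hbd z hz)
          (fun w hw => abs_sub_comm (v w) (v z) ▸
            hHol z hz w (mem_pball_of_kernel_ne_zero hsupp hw))
    _ = 6 * M ^ 2 * K * ∫ w, Ψ (z - w) * pd z w ^ α := by
        simp_rw [mul_left_comm _ K, integral_const_mul, mul_assoc]
    _ ≤ 6 * M ^ 2 * K * T ^ α := mul_le_mul_of_nonneg_left (hscale z) (by positivity)
    _ = 6 * M ^ 2 * T ^ α * K := by ring

/-- cubic commutator estimate `|(v_T)³ - (v³)_T| ≤ 6‖v‖² T^α [v]_α`. -/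
theorem stmt_9 (Ψ v : SpTime → ℝ) (T α K M : ℝ)
    (hT : 0 < T) (hα : α ∈ Set.Ioo (0:ℝ) 1) (hK : 0 ≤ K) (hM : 0 ≤ M)
    (hv : Continuous v)
    (hΨ0 : ∀ z, 0 ≤ Ψ z)
    (hsupp : ∀ z, Ψ z ≠ 0 → pd 0 z < T)
    (hint : ∫ z, Ψ z = 1)
    (hscale : ∀ x : SpTime, ∫ y, Ψ (x - y) * pd x y ^ α ≤ T ^ α)
    (z : SpTime)
    (hHol : ∀ w ∈ pball z T, ∀ w' ∈ pball z T, |v w - v w'| ≤ K * pd w w' ^ α)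
    (hbd : ∀ w ∈ pball z T, |v w| ≤ M)
    (hI1 : Integrable (fun w => Ψ (z - w) * v w))
    (hI3 : Integrable (fun w => Ψ (z - w) * (v w) ^ 3)) :
    |(∫ w, Ψ (z - w) * v w) ^ 3 - ∫ w, Ψ (z - w) * (v w) ^ 3|
      ≤ 6 * M ^ 2 * T ^ α * K :=
  stmt_9_general Ψ v T α K M hT hα hK hΨ0 hsupp hint hscale z hHol hbd hI1 hI3
end
end

section
/- Interior cone condition for parabolic boxes: let P_R = (R², 1) × {x ∈ ℝ³ : |x|_∞ < 1-R} with R < 1/2, and let D_d denote the set of points of P_R at parabolic distance at least d from its parabolic boundary. Then for every d with D_d nonempty, for all r ∈ [0, 1/2 - d], every x ∈ D_d, and every nonzero vector ν ∈ ℝ³, there exists y ∈ D_d with d(x,y) = r such that |ν · (X(y) - X(x))| ≥ (√2/2)|ν| d(x,y), where X is the spatial projection. -/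
open MeasureTheory Finset Set

noncomputable section

/-!
The parabolic boundary of `P_R` is its bottom `{R²} × B̄` together with its lateral side
`[R², 1] × ∂B`, so `(t, x) ∈ (P_R)_d` exactly when `(t, x) ∈ P_R`, `d ≤ √(t - R²)` and
`d ≤ 1 - R - |x|_∞`. Given `x ∈ (P_R)_d` and `ν`, move `x` by `r` in space, along an axis `e_j`
with `|ν_j| = |ν|` and towards the origin. The new point `y` has the same time and
`|y|_∞ ≤ max(|x|_∞, r) ≤ 1 - R - d`, so it stays in `(P_R)_d`, while `|ν · (y - x)| = |ν| r`.
-/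

open Metric

lemma exists_abs_eq_abs_add_le_max (a : ℝ) {r : ℝ} (hr : 0 ≤ r) :
    ∃ δ, |δ| = r ∧ |a + δ| ≤ max |a| r := by
  rcases le_total 0 a with ha | ha
  · exact ⟨-r, by simp [hr], abs_le.2 ⟨by linarith [le_max_right |a| r],
      by linarith [le_abs_self a, le_max_left |a| r]⟩⟩
  · exact ⟨r, abs_of_nonneg hr, abs_le.2 ⟨by linarith [neg_abs_le a, le_max_left |a| r],
      by linarith [le_max_right |a| r]⟩⟩

lemma exists_norm_add_single_le_max {ι : Type*} [Fintype ι] [DecidableEq ι]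
    (x : ι → ℝ) (j : ι) {r : ℝ} (hr : 0 ≤ r) :
    ∃ δ, |δ| = r ∧ ‖x + Pi.single j δ‖ ≤ max ‖x‖ r := by
  obtain ⟨δ, hδ, hj⟩ := exists_abs_eq_abs_add_le_max (x j) hr
  refine ⟨δ, hδ, (pi_norm_le_iff_of_nonneg (by positivity)).2 fun i => ?_⟩
  rcases eq_or_ne i j with rfl | hij
  · simpa using hj.trans (max_le_max_right r (by simpa using norm_le_pi_norm x i))
  · simpa [hij] using (norm_le_pi_norm x i).trans (le_max_left _ r)

lemma exists_norm_eq_norm_sub_eq {E : Type*} [NormedAddCommGroup E] [NormedSpace ℝ E]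
    [Nontrivial E] {v : E} {a : ℝ} (hv : ‖v‖ ≤ a) :
    ∃ ξ : E, ‖ξ‖ = a ∧ ‖v - ξ‖ = a - ‖v‖ := by
  rcases eq_or_ne v 0 with rfl | hv0
  · obtain ⟨ξ, hξ⟩ := exists_norm_eq E (norm_zero (E := E) ▸ hv)
    exact ⟨ξ, hξ, by simp [hξ]⟩
  · have hv' : 0 < ‖v‖ := norm_pos_iff.2 hv0
    refine ⟨(a / ‖v‖) • v, ?_, ?_⟩
    · rw [norm_smul, Real.norm_of_nonneg (div_nonneg (hv'.le.trans hv) hv'.le),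
        div_mul_cancel₀ _ hv'.ne']
    · rw [show v - (a / ‖v‖) • v = (1 - a / ‖v‖) • v by rw [sub_smul, one_smul], norm_smul,
        Real.norm_of_nonpos (by rw [sub_nonpos, one_le_div hv']; exact hv), neg_sub, sub_mul,
        div_mul_cancel₀ _ hv'.ne', one_mul]

lemma pd_mk_snd (z : SpTime) (t : ℝ) : pd z (t, z.2) = √|z.1 - t| := by
  simp [pd]

lemma pd_mk_fst (z : SpTime) (ξ : Fin 3 → ℝ) : pd z (z.1, ξ) = ‖z.2 - ξ‖ := by
  simp [pd]

lemma pd_lt {z w : SpTime} {ρ : ℝ} (ht : |z.1 - w.1| < ρ ^ 2) (hx : ‖z.2 - w.2‖ < ρ) :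
    pd z w < ρ :=
  max_lt ((Real.sqrt_lt' ((norm_nonneg _).trans_lt hx)).2 ht) hx

lemma mk_mem_pballB {t ρ : ℝ} {ξ η : Fin 3 → ℝ} (h : ‖ξ - η‖ < ρ) :
    ((t - ρ ^ 2 / 2, η) : SpTime) ∈ pballB (t, ξ) ρ := by
  have hρ : 0 < ρ ^ 2 := pow_pos ((norm_nonneg _).trans_lt h) 2
  refine ⟨pd_lt ?_ h, by simp only; linarith⟩
  rw [sub_sub_cancel, abs_of_pos (by positivity)]
  linarith

section PRset

variable {R d : ℝ}

lemma closure_PRset (h : (PRset R).Nonempty) :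
    closure (PRset R) = Icc (R ^ 2) 1 ×ˢ closedBall 0 (1 - R) := by
  obtain ⟨x, ⟨hx₁, hx₁'⟩, hx₂⟩ := h
  have hx₂ : ‖x.2‖ < 1 - R := hx₂
  rw [PRset, ← ball_zero_eq, closure_prod_eq, closure_Ioo (hx₁.trans hx₁').ne,
    closure_ball _ (by linarith [norm_nonneg x.2])]

lemma mem_closure_PRset (h : (PRset R).Nonempty) {z : SpTime} :
    z ∈ closure (PRset R) ↔ z.1 ∈ Icc (R ^ 2) 1 ∧ ‖z.2‖ ≤ 1 - R := by
  rw [closure_PRset h, mem_prod, mem_closedBall_zero_iff]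

lemma bottom_mem_pBoundary_PRset (h : (PRset R).Nonempty) {ξ : Fin 3 → ℝ} (hξ : ‖ξ‖ ≤ 1 - R) :
    ((R ^ 2, ξ) : SpTime) ∈ pBoundary (PRset R) := by
  have hR : R ^ 2 ≤ 1 := by
    obtain ⟨x, ⟨hx₁, hx₁'⟩, -⟩ := h
    linarith
  refine ⟨(mem_closure_PRset h).2 ⟨⟨le_rfl, hR⟩, hξ⟩, fun ρ hρ hsub => ?_⟩
  have hmem := (mem_closure_PRset h).1 (hsub (mk_mem_pballB (t := R ^ 2) (ξ := ξ)
    (by rwa [sub_self, norm_zero])))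
  linarith [hmem.1.1, pow_pos hρ 2]

lemma lateral_mem_pBoundary_PRset (h : (PRset R).Nonempty) {t : ℝ}
    (ht : t ∈ Icc (R ^ 2) 1) {ξ : Fin 3 → ℝ} (hξ : ‖ξ‖ = 1 - R) :
    ((t, ξ) : SpTime) ∈ pBoundary (PRset R) := by
  refine ⟨(mem_closure_PRset h).2 ⟨ht, hξ.le⟩, fun ρ hρ hsub => ?_⟩
  -- `ξ` lies on the frontier of the closed ball, hence is a limit of points outside it
  have hfr : ξ ∈ closure (closedBall (0 : Fin 3 → ℝ) (1 - R))ᶜ :=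
    frontier_subset_closure (by rwa [frontier_compl, frontier_closedBall', mem_sphere_zero_iff_norm])
  obtain ⟨η, hη, hξη⟩ := Metric.mem_closure_iff.1 hfr ρ hρ
  rw [dist_eq_norm] at hξη
  have hmem := (mem_closure_PRset h).1 (hsub (mk_mem_pballB (t := t) hξη))
  exact hη (mem_closedBall_zero_iff.2 hmem.2)

lemma fst_le_or_le_norm_of_mem_pBoundary_PRset {w : SpTime} (hw : w ∈ pBoundary (PRset R)) :
    w.1 ≤ R ^ 2 ∨ 1 - R ≤ ‖w.2‖ := by
  obtain ⟨hcl, hb⟩ := hw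
  have hw₁ := ((mem_closure_PRset (closure_nonempty_iff.1 ⟨w, hcl⟩)).1 hcl).1
  by_contra! hint
  refine hb (min √(w.1 - R ^ 2) (1 - R - ‖w.2‖))
    (lt_min (Real.sqrt_pos.2 (by linarith)) (by linarith)) fun v ⟨hv, hvt⟩ => subset_closure ?_
  have ht : √|w.1 - v.1| < √(w.1 - R ^ 2) :=
    ((le_max_left _ _).trans_lt hv).trans_le (min_le_left _ _)
  have hx : ‖w.2 - v.2‖ < 1 - R - ‖w.2‖ :=
    ((le_max_right _ _).trans_lt hv).trans_le (min_le_right _ _)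
  rw [Real.sqrt_lt_sqrt_iff (abs_nonneg _), abs_of_pos (by linarith)] at ht
  have hv₂ : ‖v.2‖ < 1 - R := by
    linarith [norm_le_norm_add_norm_sub' v.2 w.2, norm_sub_rev v.2 w.2]
  exact ⟨⟨by linarith, by linarith [hw₁.2]⟩, hv₂⟩

lemma mem_shrink_PRset_iff {z : SpTime} :
    z ∈ shrink (PRset R) d ↔ z ∈ PRset R ∧ d ≤ √(z.1 - R ^ 2) ∧ d ≤ 1 - R - ‖z.2‖ := by
  constructor
  · rintro ⟨hz, hdist⟩
    have hne : (PRset R).Nonempty := ⟨z, hz⟩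
    obtain ⟨⟨hz₁, hz₁'⟩, hz₂ : ‖z.2‖ < 1 - R⟩ := hz
    obtain ⟨ξ, hξ, hzξ⟩ := exists_norm_eq_norm_sub_eq hz₂.le
    refine ⟨⟨⟨hz₁, hz₁'⟩, hz₂⟩, ?_, ?_⟩
    · have := hdist _ (bottom_mem_pBoundary_PRset hne hz₂.le)
      rwa [pd_mk_snd, abs_of_pos (by linarith)] at this
    · have := hdist _ (lateral_mem_pBoundary_PRset hne ⟨hz₁.le, hz₁'.le⟩ hξ)
      rwa [pd_mk_fst, hzξ] at this
  · rintro ⟨hz, hdt, hdx⟩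
    refine ⟨hz, fun w hw => ?_⟩
    rcases fst_le_or_le_norm_of_mem_pBoundary_PRset hw with hw | hw
    · refine hdt.trans ((Real.sqrt_le_sqrt ?_).trans (le_max_left _ _))
      linarith [le_abs_self (z.1 - w.1)]
    · refine hdx.trans (le_trans ?_ (le_max_right _ _))
      linarith [norm_le_norm_add_norm_sub' w.2 z.2, norm_sub_rev w.2 z.2]

end PRset

theorem stmt_10_general (R d : ℝ) (hR : R < 1/2) (hd : 0 ≤ d) :
    ∀ r ∈ Set.Icc (0:ℝ) (1/2 - d), ∀ x ∈ shrink (PRset R) d,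
      ∀ ν : Fin 3 → ℝ, ν ≠ 0 →
        ∃ y ∈ shrink (PRset R) d, pd x y = r ∧
          Real.sqrt 2 / 2 * ‖ν‖ * pd x y ≤ |∑ i, ν i * (y.2 i - x.2 i)| := by
  rintro r ⟨hr₀, hr₁⟩ x hx ν -
  obtain ⟨⟨hxt, hx₂⟩, hdt, hdx⟩ := mem_shrink_PRset_iff.1 hx
  obtain ⟨⟨j, hj : ‖ν j‖ = ‖ν‖⟩, -⟩ := IsGreatest.pi_norm ν
  obtain ⟨δ, hδ, hy⟩ := exists_norm_add_single_le_max x.2 j hr₀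
  have hpd : pd x (x.1, x.2 + Pi.single j δ) = r := by
    rw [pd_mk_fst, sub_add_cancel_left, norm_neg, Pi.norm_single, Real.norm_eq_abs, hδ]
  have hyP : ((x.1, x.2 + Pi.single j δ) : SpTime) ∈ PRset R :=
    ⟨hxt, hy.trans_lt (max_lt hx₂ (by linarith))⟩
  have hyd : d ≤ 1 - R - ‖x.2 + Pi.single j δ‖ := by
    linarith [hy.trans (max_le (by linarith) (by linarith) : max ‖x.2‖ r ≤ 1 - R - d)]
  refine ⟨_, mem_shrink_PRset_iff.2 ⟨hyP, hdt, hyd⟩, hpd, ?_⟩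
  have hsum : ∑ i, ν i * ((x.2 + Pi.single j δ : Fin 3 → ℝ) i - x.2 i) = ν j * δ := by
    simp [Pi.single_apply]
  have hsqrt : √2 / 2 ≤ 1 := by
    rw [div_le_one two_pos, Real.sqrt_le_left two_pos.le]; norm_num
  rw [hpd, hsum, abs_mul, ← Real.norm_eq_abs, hj, hδ, mul_assoc]
  exact mul_le_of_le_one_left (by positivity) hsqrt

/-- spatial interior cone condition for the shrunk parabolic boxes
`(P_R)_d` with parameters `r_d = 1/2 - d` and `λ = √2/2`, uniformly in `R < 1/2`. -/
theorem stmt_10 (R d : ℝ) (hR0 : 0 ≤ R) (hR : R < 1/2) (hd : 0 ≤ d)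
    (hne : (shrink (PRset R) d).Nonempty) :
    ∀ r ∈ Set.Icc (0:ℝ) (1/2 - d), ∀ x ∈ shrink (PRset R) d,
      ∀ ν : Fin 3 → ℝ, ν ≠ 0 →
        ∃ y ∈ shrink (PRset R) d, pd x y = r ∧
          Real.sqrt 2 / 2 * ‖ν‖ * pd x y ≤ |∑ i, ν i * (y.2 i - x.2 i)| :=
  stmt_10_general R d hR hd
end
end

section
/- Gradient bound from two-variable Hölder control: let D be a bounded domain in ℝ×ℝ³, 1 < κ < 2, U : D×D → ℝ with U(x,x)=0, and suppose [U]_{κ,D_d} < ∞ where the seminorm allows subtracting an affine correction ν(x)·(X(y)-X(x)) at each base point, with ν a near-optimal choice. Assume D_d satisfies the spatial interior cone condition with parameters r_d > 0 and λ ∈ (0,1). Then for all r ∈ (0, r_d]: λ‖ν‖_{D_d} ≤ [U]_{κ,D_d} r^{κ-1} + ‖U‖_{D_d,r} r^{-1}. -/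
open MeasureTheory Finset Set

noncomputable section

/-! Apply the cone condition at `x` in the direction `ν x` and at distance `r`: the resulting `y`
satisfies `λ |ν x| r ≤ |ν x · (y - x)| ≤ |U x y| + [U]_κ r^κ ≤ ‖U‖_r + [U]_κ r^κ`; divide by `r`.
When `ν x = 0` any cone point will do. -/

theorem exists_cone_point_of_cone {E : Set SpTime} {rd lam : ℝ}
    (hcone : ∀ x ∈ E, ∀ s ∈ Set.Icc (0:ℝ) rd, ∀ w : Fin 3 → ℝ, w ≠ 0 →
      ∃ y ∈ E, pd x y = s ∧ lam * ‖w‖ * pd x y ≤ |∑ i, w i * (y.2 i - x.2 i)|)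
    {x : SpTime} (hx : x ∈ E) {s : ℝ} (hs : s ∈ Set.Icc (0:ℝ) rd) (w : Fin 3 → ℝ) :
    ∃ y ∈ E, pd x y = s ∧ lam * ‖w‖ * pd x y ≤ |∑ i, w i * (y.2 i - x.2 i)| := by
  rcases eq_or_ne w 0 with rfl | hw
  · obtain ⟨y, hy, hxy, -⟩ := hcone x hx s hs (fun _ => 1) (ne_of_apply_ne (· 0) one_ne_zero)
    exact ⟨y, hy, hxy, by simp⟩
  · exact hcone x hx s hs w hw

theorem le_mul_rpow_sub_one_add_mul_inv {a L u B C r κ : ℝ} (hr : 0 < r)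
    (hL : a * r ≤ |L|) (hu : |u| ≤ C) (huL : |u - L| ≤ B * r ^ κ) :
    a ≤ B * r ^ (κ - 1) + C * r⁻¹ := by
  have hrκ : r ^ κ = r ^ (κ - 1) * r := by
    rw [← Real.rpow_add_one hr.ne', sub_add_cancel]
  have hmain : a * r ≤ (B * r ^ (κ - 1) + C * r⁻¹) * r :=
    calc a * r ≤ |L| := hL
      _ = |u - (u - L)| := by rw [sub_sub_cancel]
      _ ≤ |u| + |u - L| := abs_sub _ _
      _ ≤ C + B * r ^ κ := add_le_add hu huL
      _ = (B * r ^ (κ - 1) + C * r⁻¹) * r := by rw [hrκ]; field_simp; ring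
  exact le_of_mul_le_mul_right hmain hr

theorem stmt_11_general (E : Set SpTime) (U : SpTime → SpTime → ℝ) (ν : SpTime → Fin 3 → ℝ)
    (κ Uκ Ur rd lam r : ℝ)
    (hν : ∀ x ∈ E, ∀ y ∈ E,
      |U x y - ∑ i, ν x i * (y.2 i - x.2 i)| ≤ Uκ * pd x y ^ κ)
    (hUr : ∀ x ∈ E, ∀ y ∈ E, pd x y ≤ r → |U x y| ≤ Ur)
    (hcone : ∀ x ∈ E, ∀ s ∈ Set.Icc (0:ℝ) rd, ∀ w : Fin 3 → ℝ, w ≠ 0 →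
      ∃ y ∈ E, pd x y = s ∧ lam * ‖w‖ * pd x y ≤ |∑ i, w i * (y.2 i - x.2 i)|)
    (hr : r ∈ Set.Ioc (0:ℝ) rd) :
    ∀ x ∈ E, lam * ‖ν x‖ ≤ Uκ * r ^ (κ - 1) + Ur * r⁻¹ := by
  intro x hx
  obtain ⟨y, hy, hxy, hcone_y⟩ := exists_cone_point_of_cone hcone hx ⟨hr.1.le, hr.2⟩ (ν x)
  have hhol := hν x hx y hy
  rw [hxy] at hcone_y hhol
  exact le_mul_rpow_sub_one_add_mul_inv hr.1 hcone_y (hUr x hx y hy hxy.le) hhol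

/-- gradient bound `λ‖ν‖ ≤ [U]_κ r^{κ-1} + ‖U‖_{D,r} r⁻¹` from the
two-variable Hölder control and the interior cone condition. -/
theorem stmt_11 (E : Set SpTime) (U : SpTime → SpTime → ℝ) (ν : SpTime → Fin 3 → ℝ)
    (κ Uκ Ur rd lam r : ℝ)
    (hκ : 1 < κ) (hκ' : κ < 2)
    (hdiag : ∀ x ∈ E, U x x = 0)
    (hν : ∀ x ∈ E, ∀ y ∈ E,
      |U x y - ∑ i, ν x i * (y.2 i - x.2 i)| ≤ Uκ * pd x y ^ κ)
    (hUr : ∀ x ∈ E, ∀ y ∈ E, pd x y ≤ r → |U x y| ≤ Ur)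
    (hcone : ∀ x ∈ E, ∀ s ∈ Set.Icc (0:ℝ) rd, ∀ w : Fin 3 → ℝ, w ≠ 0 →
      ∃ y ∈ E, pd x y = s ∧ lam * ‖w‖ * pd x y ≤ |∑ i, w i * (y.2 i - x.2 i)|)
    (hlam : lam ∈ Set.Ioo (0:ℝ) 1) (hrd : 0 < rd) (hr : r ∈ Set.Ioc (0:ℝ) rd) :
    ∀ x ∈ E, lam * ‖ν x‖ ≤ Uκ * r ^ (κ - 1) + Ur * r⁻¹ :=
  stmt_11_general E U ν κ Uκ Ur rd lam r hν hUr hcone hr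
end
end
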